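/- Let λ > 0 and Q_t > Q_h > 0 be real numbers, and define w(Γ) = exp(−Γ·(Q_t − Q_h)/λ)·(Γ·Q_t + λ)/(Γ·Q_h + λ) for Γ ≥ 0. Then w is strictly decreasing on [0, ∞); that is, the liquidity market share of the low-fee pool strictly decreases in the gas cost Γ. -/

import Mathlib

/-!
Differentiating, `w'(Γ)` is `-exp(-Γ(Q_t - Q_h)/λ) (Q_t - Q_h)/λ` times
`((ΓQ_t + λ)(ΓQ_h + λ) - λ²)/(ΓQ_h + λ)²`, and the bracket `Γ(ΓQ_tQ_h + λ(Q_t + Q_h))`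
is positive for `Γ > 0`; so `w' < 0` on the interior of `[0, ∞)`.
-/

open Set

noncomputable def lowFeeShare (lam Qt Qh Γ : ℝ) : ℝ :=
  Real.exp (-Γ * (Qt - Qh) / lam) * (Γ * Qt + lam) / (Γ * Qh + lam)

theorem hasDerivAt_lowFeeShare {lam Qt Qh Γ : ℝ} (hlam : lam ≠ 0) (hΓ : Γ * Qh + lam ≠ 0) :
    HasDerivAt (lowFeeShare lam Qt Qh)
      (-(Real.exp (-Γ * (Qt - Qh) / lam) * (Qt - Qh) * Γ * (Γ * Qt * Qh + lam * (Qt + Qh)))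
        / (lam * (Γ * Qh + lam) ^ 2)) Γ := by
  have hexp : HasDerivAt (fun x : ℝ => Real.exp (-x * (Qt - Qh) / lam))
      (Real.exp (-Γ * (Qt - Qh) / lam) * (-(Qt - Qh) / lam)) Γ := by
    simpa using (((hasDerivAt_id Γ).neg.mul_const (Qt - Qh)).div_const lam).exp
  have hnum : HasDerivAt (fun x : ℝ => x * Qt + lam) Qt Γ := by
    simpa using ((hasDerivAt_id Γ).mul_const Qt).add_const lam
  have hden : HasDerivAt (fun x : ℝ => x * Qh + lam) Qh Γ := by
    simpa using ((hasDerivAt_id Γ).mul_const Qh).add_const lam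
  refine ((hexp.mul hnum).div hden hΓ).congr_deriv ?_
  simp only [Pi.mul_apply]
  field_simp
  ring

theorem low_fee_market_share_strictAnti
    (lam Qt Qh : ℝ) (hlam : 0 < lam) (hQh : 0 < Qh) (hQ : Qh < Qt) :
    StrictAntiOn
      (fun Γ : ℝ => Real.exp (-Γ * (Qt - Qh) / lam) * (Γ * Qt + lam) / (Γ * Qh + lam))
      (Set.Ici 0) := by
  show StrictAntiOn (lowFeeShare lam Qt Qh) (Ici 0)
  have hQt : 0 < Qt := hQh.trans hQ
  have hgap : 0 < Qt - Qh := sub_pos.2 hQ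
  have hderiv : ∀ Γ ∈ Ici (0 : ℝ), HasDerivAt (lowFeeShare lam Qt Qh) _ Γ := fun Γ hΓ =>
    hasDerivAt_lowFeeShare hlam.ne' (by have : (0 : ℝ) ≤ Γ := hΓ; positivity)
  refine strictAntiOn_of_deriv_neg (convex_Ici 0)
    (fun Γ hΓ => (hderiv Γ hΓ).continuousAt.continuousWithinAt) fun Γ hΓ => ?_
  have hΓ₀ : 0 < Γ := by simpa using hΓ
  rw [(hderiv Γ hΓ₀.le).deriv, neg_div, neg_lt_zero]
  positivity
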